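/- The Nash equilibrium of RPS+ is unique: if (p, q) is any Nash equilibrium of RPS+ in mixed strategies, then p = (2/5, 2/5, 1/5) and q = (2/5, 2/5, 1/5). -/
import Mathlib


/-- The payoff matrix of RPS+ (payoff to player 1). -/
noncomputable def A : Fin 3 → Fin 3 → ℝ :=
  ![![0, -1, 2], ![1, 0, -2], ![-2, 2, 0]]

/-- A mixed strategy over three actions. -/
def IsMixed (p : Fin 3 → ℝ) : Prop := (∀ i, 0 ≤ p i) ∧ ∑ i, p i = 1

/-- Expected payoff to player 1. -/
noncomputable def u (p q : Fin 3 → ℝ) : ℝ := ∑ i, ∑ j, p i * A i j * q j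

/-- A Nash equilibrium of RPS+ in mixed strategies. -/
def IsNash (p q : Fin 3 → ℝ) : Prop :=
  IsMixed p ∧ IsMixed q ∧
    (∀ p' : Fin 3 → ℝ, IsMixed p' → u p' q ≤ u p q) ∧
    (∀ q' : Fin 3 → ℝ, IsMixed q' → u p q ≤ u p q')

lemma mixed_e0 : IsMixed ![1, 0, 0] := by
  refine ⟨fun i => ?_, by simp [Fin.sum_univ_three]⟩
  fin_cases i <;> norm_num

lemma mixed_e1 : IsMixed ![0, 1, 0] := by
  refine ⟨fun i => ?_, by simp [Fin.sum_univ_three]⟩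
  fin_cases i <;> norm_num

lemma mixed_e2 : IsMixed ![0, 0, 1] := by
  refine ⟨fun i => ?_, by simp [Fin.sum_univ_three]⟩
  fin_cases i <;> norm_num

lemma ue0 (q : Fin 3 → ℝ) : u ![1,0,0] q = -q 1 + 2 * q 2 := by
  simp [u, A, Fin.sum_univ_three]
lemma ue1 (q : Fin 3 → ℝ) : u ![0,1,0] q = q 0 - 2 * q 2 := by
  simp [u, A, Fin.sum_univ_three]; try ring
lemma ue2 (q : Fin 3 → ℝ) : u ![0,0,1] q = -2 * q 0 + 2 * q 1 := by
  simp [u, A, Fin.sum_univ_three]; try ring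
lemma uf0 (p : Fin 3 → ℝ) : u p ![1,0,0] = p 1 - 2 * p 2 := by
  simp [u, A, Fin.sum_univ_three]; try ring
lemma uf1 (p : Fin 3 → ℝ) : u p ![0,1,0] = -p 0 + 2 * p 2 := by
  simp [u, A, Fin.sum_univ_three]; try ring
lemma uf2 (p : Fin 3 → ℝ) : u p ![0,0,1] = 2 * p 0 - 2 * p 1 := by
  simp [u, A, Fin.sum_univ_three]; try ring

theorem rpsPlus_nash_unique (p q : Fin 3 → ℝ) (h : IsNash p q) :
    p = ![2/5, 2/5, 1/5] ∧ q = ![2/5, 2/5, 1/5] := by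
  obtain ⟨⟨hp0, hp1⟩, ⟨hq0, hq1⟩, hbr1, hbr2⟩ := h
  have r0 := hbr1 _ mixed_e0; rw [ue0] at r0
  have r1 := hbr1 _ mixed_e1; rw [ue1] at r1
  have r2 := hbr1 _ mixed_e2; rw [ue2] at r2
  have c0 := hbr2 _ mixed_e0; rw [uf0] at c0
  have c1 := hbr2 _ mixed_e1; rw [uf1] at c1
  have c2 := hbr2 _ mixed_e2; rw [uf2] at c2
  simp only [Fin.sum_univ_three] at hp1 hq1
  have hv0 : (0:ℝ) ≤ u p q := by linarith
  have hv1 : u p q ≤ 0 := by linarith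
  have hv : u p q = 0 := le_antisymm hv1 hv0
  rw [hv] at r0 r1 r2 c0 c1 c2
  have hP0 : p 0 = 2/5 := by linarith
  have hP1 : p 1 = 2/5 := by linarith
  have hP2 : p 2 = 1/5 := by linarith
  have hQ0 : q 0 = 2/5 := by linarith
  have hQ1 : q 1 = 2/5 := by linarith
  have hQ2 : q 2 = 1/5 := by linarith
  constructor <;> funext i <;> fin_cases i
  · exact hP0
  · exact hP1
  · exact hP2
  · exact hQ0
  · exact hQ1
  · exact hQ2
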